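/- arXiv:1807.01105 — 2 statements merged into one kernel-verified Lean document; each statement's English description precedes it below -/
import Mathlib

section
/- Let R > 0 and 0 < d < R, and set m = R - d, a = 2*Real.sqrt (R^2 - d^2), and r = Real.sqrt (2*R*(R + d)) - (R + d). Then a = 2*r + 2*m if and only if 16*d^2*(R + d) = (R - d)*(R + 3*d)^2. -/
/-!
Writing `s = √(R² - d²)` and `t = √(2R(R + d))`, the relation `a = 2r + 2m` says `s + 2d = t`.
Both sides are nonnegative, so this is equivalent to its square, which after `s² = R² - d²`
reads `4ds = (R - d)(R + 3d)`. Both sides are again nonnegative; squaring once more and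
cancelling the positive factor `R - d` leaves `16d²(R + d) = (R - d)(R + 3d)²`.
-/

namespace GionShrine

variable {R d : ℝ}

theorem sqrt_add_eq_sqrt_iff (hd : 0 ≤ d) (hdR : d ≤ R) :
    √(R ^ 2 - d ^ 2) + 2 * d = √(2 * R * (R + d)) ↔
      4 * d * √(R ^ 2 - d ^ 2) = (R - d) * (R + 3 * d) := by
  have hs : √(R ^ 2 - d ^ 2) ^ 2 = R ^ 2 - d ^ 2 := Real.sq_sqrt (by nlinarith)
  have ht : √(2 * R * (R + d)) ^ 2 = 2 * R * (R + d) := Real.sq_sqrt (by nlinarith)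
  rw [← pow_left_inj₀ (by positivity) (Real.sqrt_nonneg _) two_ne_zero]
  constructor <;> intro h
  · linear_combination h - hs + ht
  · linear_combination h + hs - ht

theorem four_mul_sqrt_eq_iff (hd : 0 ≤ d) (hdR : d < R) :
    4 * d * √(R ^ 2 - d ^ 2) = (R - d) * (R + 3 * d) ↔
      16 * d ^ 2 * (R + d) = (R - d) * (R + 3 * d) ^ 2 := by
  have hRd : 0 < R - d := sub_pos.mpr hdR
  have hs : √(R ^ 2 - d ^ 2) ^ 2 = R ^ 2 - d ^ 2 := Real.sq_sqrt (by nlinarith)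
  rw [← pow_left_inj₀ (by positivity) (by nlinarith) two_ne_zero]
  have hsq : (4 * d * √(R ^ 2 - d ^ 2)) ^ 2 = (R - d) * (16 * d ^ 2 * (R + d)) := by
    rw [mul_pow, hs]; ring
  rw [hsq, show ((R - d) * (R + 3 * d)) ^ 2 = (R - d) * ((R - d) * (R + 3 * d) ^ 2) by ring]
  exact mul_right_inj' hRd.ne'

end GionShrine

open GionShrine in
theorem stmt_5_general (R d m a r : ℝ) (hd : 0 < d) (hdR : d < R)
    (hm : m = R - d) (ha : a = 2 * Real.sqrt (R ^ 2 - d ^ 2))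
    (hr : r = Real.sqrt (2 * R * (R + d)) - (R + d)) :
    a = 2 * r + 2 * m ↔ 16 * d ^ 2 * (R + d) = (R - d) * (R + 3 * d) ^ 2 := by
  subst hm ha hr
  rw [← four_mul_sqrt_eq_iff hd.le hdR, ← sqrt_add_eq_sqrt_iff hd.le hdR.le]
  constructor <;> intro h <;> linarith

theorem stmt_5 (R d m a r : ℝ) (hR : 0 < R) (hd : 0 < d) (hdR : d < R)
    (hm : m = R - d) (ha : a = 2 * Real.sqrt (R ^ 2 - d ^ 2))
    (hr : r = Real.sqrt (2 * R * (R + d)) - (R + d)) :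
    a = 2 * r + 2 * m ↔ 16 * d ^ 2 * (R + d) = (R - d) * (R + 3 * d) ^ 2 :=
  stmt_5_general R d m a r hd hdR hm ha hr
end

section
/- Let R > 0 and 0 < d < R with m = R - d, a = 2*Real.sqrt (R^2 - d^2), r = Real.sqrt (2*R*(R+d)) - (R+d), and suppose a = 2*r + 2*m. If R is rational, then d is irrational. -/
/-!
Eliminating the square roots from `a = 2r + 2m` leaves the quartic
`(R - d) (R³ + 5R²d - 13Rd² - 25d³) = 0`, so `u = R / d` is a root of the monic integer cubic
`u³ + 5u² - 13u - 25`. A rational root of a monic integer polynomial is an integer, and this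
cubic has no root even modulo 3; hence `R / d` is irrational, and so is `d` when `R` is rational.
-/

open Polynomial

/-- The paper's cubic `25t³ + 13t² - 5t - 1` in `t = d / R`, rewritten in `u = 1 / t = R / d`. -/
noncomputable def gionCubic : ℤ[X] := X ^ 3 + 5 * X ^ 2 - 13 * X - 25

theorem irrational_of_aeval_eq_zero_of_monic {p : ℤ[X]} (hp : p.Monic) (n : ℕ)
    (hmod : ∀ z : ZMod n, (p.map (Int.castRingHom (ZMod n))).eval z ≠ 0) {x : ℝ}
    (hx : aeval x p = 0) : Irrational x := by
  rintro ⟨q, rfl⟩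
  have hq : aeval q p = 0 := by
    rw [← (algebraMap ℚ ℝ).injective.eq_iff, ← aeval_algebraMap_apply, map_zero]
    exact hx
  obtain ⟨k, rfl⟩ := isInteger_of_is_root_of_monic hp hq
  have hk : p.eval k = 0 := by
    rwa [aeval_algebraMap_apply, aeval_def, Algebra.algebraMap_self, eval₂_id,
      map_eq_zero_iff _ (algebraMap ℤ ℚ).injective_int] at hq
  exact hmod k (by rw [eval_intCast_map, Int.cast_id, hk, map_zero])

theorem gionCubic_monic : gionCubic.Monic := by
  unfold gionCubic; monicity!

theorem gionCubic_map_eval_ne_zero (z : ZMod 3) :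
    (gionCubic.map (Int.castRingHom (ZMod 3))).eval z ≠ 0 := by
  simp only [gionCubic, Polynomial.map_sub, Polynomial.map_add, Polynomial.map_mul,
    Polynomial.map_pow, map_X, Polynomial.map_ofNat, eval_sub, eval_add, eval_mul, eval_pow,
    eval_X, eval_ofNat]
  revert z; decide

theorem irrational_of_aeval_gionCubic_eq_zero {x : ℝ} (hx : aeval x gionCubic = 0) :
    Irrational x :=
  irrational_of_aeval_eq_zero_of_monic gionCubic_monic 3 gionCubic_map_eval_ne_zero hx

theorem aeval_div_gionCubic_eq_zero {R d : ℝ} (hd : d ≠ 0)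
    (hcubic : R ^ 3 + 5 * R ^ 2 * d - 13 * R * d ^ 2 - 25 * d ^ 3 = 0) :
    aeval (R / d) gionCubic = 0 := by
  simp only [gionCubic, map_sub, map_add, map_mul, map_pow, aeval_X, map_ofNat]
  field_simp
  linear_combination hcubic

theorem gion_cubic_of_sqrt_add_eq_sqrt {R d : ℝ} (hd : 0 ≤ d) (hdR : d < R)
    (h : Real.sqrt (R ^ 2 - d ^ 2) + 2 * d = Real.sqrt (2 * R * (R + d))) :
    R ^ 3 + 5 * R ^ 2 * d - 13 * R * d ^ 2 - 25 * d ^ 3 = 0 := by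
  set s := Real.sqrt (R ^ 2 - d ^ 2)
  have hs : s ^ 2 = R ^ 2 - d ^ 2 := Real.sq_sqrt (by nlinarith)
  have hlin : 4 * d * s = R ^ 2 + 2 * R * d - 3 * d ^ 2 := by
    have hsq : (s + 2 * d) ^ 2 = 2 * R * (R + d) := by rw [h]; exact Real.sq_sqrt (by nlinarith)
    linear_combination hsq - hs
  have hquart : (R - d) * (R ^ 3 + 5 * R ^ 2 * d - 13 * R * d ^ 2 - 25 * d ^ 3) = 0 := by
    linear_combination 16 * d ^ 2 * hs - (4 * d * s + R ^ 2 + 2 * R * d - 3 * d ^ 2) * hlin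
  exact (mul_eq_zero.mp hquart).resolve_left (sub_ne_zero.mpr hdR.ne')

theorem stmt_9_general (R d m a r : ℝ) (hd : 0 < d) (hdR : d < R)
    (hm : m = R - d) (ha : a = 2 * Real.sqrt (R ^ 2 - d ^ 2))
    (hr : r = Real.sqrt (2 * R * (R + d)) - (R + d))
    (hrel : a = 2 * r + 2 * m) (hQ : ∃ q : ℚ, (q : ℝ) = R) :
    Irrational d := by
  obtain ⟨q, rfl⟩ := hQ
  have hsqrt : Real.sqrt ((q : ℝ) ^ 2 - d ^ 2) + 2 * d = Real.sqrt (2 * q * (q + d)) := by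
    subst hm ha hr; linarith
  have hcubic := gion_cubic_of_sqrt_add_eq_sqrt hd.le hdR hsqrt
  have hirr : Irrational (q / d) :=
    irrational_of_aeval_gionCubic_eq_zero (aeval_div_gionCubic_eq_zero hd.ne' hcubic)
  exact hirr.of_ratCast_div

theorem stmt_9 (R d m a r : ℝ) (hR : 0 < R) (hd : 0 < d) (hdR : d < R)
    (hm : m = R - d) (ha : a = 2 * Real.sqrt (R ^ 2 - d ^ 2))
    (hr : r = Real.sqrt (2 * R * (R + d)) - (R + d))
    (hrel : a = 2 * r + 2 * m) (hQ : ∃ q : ℚ, (q : ℝ) = R) :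
    Irrational d :=
  stmt_9_general R d m a r hd hdR hm ha hr hrel hQ
end
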